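/- arXiv:2008.02925 — 7 statements merged into one kernel-verified Lean document; each statement's English description precedes it below -/
import Mathlib

section
/- Let G be a group and g, h ∈ G elements satisfying the braid relation g h g = h g h. Then the triples (g, h, g) and (h, g, h) are Hurwitz equivalent. -/
/-- An elementary Hurwitz move on a tuple of elements of a group: replace an adjacent
pair `(a, b)` by `(a * b * a⁻¹, a)` or by `(b, b⁻¹ * a * b)`. -/
inductive HurwitzMove {G : Type*} [Group G] : List G → List G → Prop
  | slideLeft (l₁ l₂ : List G) (a b : G) :
      HurwitzMove (l₁ ++ a :: b :: l₂) (l₁ ++ (a * b * a⁻¹) :: a :: l₂)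
  | slideRight (l₁ l₂ : List G) (a b : G) :
      HurwitzMove (l₁ ++ a :: b :: l₂) (l₁ ++ b :: (b⁻¹ * a * b) :: l₂)

/-- Two tuples are Hurwitz equivalent if one is obtained from the other by a finite
sequence of elementary Hurwitz moves. -/
def HurwitzEquiv {G : Type*} [Group G] : List G → List G → Prop :=
  Relation.ReflTransGen HurwitzMove

/-- If `g` and `h` satisfy the braid relation, then `(g, h, g)` and `(h, g, h)` are
Hurwitz equivalent. -/
theorem hurwitzEquiv_braid {G : Type*} [Group G] {g h : G}
    (hbr : g * h * g = h * g * h) :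
    HurwitzEquiv [g, h, g] [h, g, h] := by
  have key : g⁻¹ * (h⁻¹ * g * h) * g = h := by
    have : g⁻¹ * (h⁻¹ * g * h) * g = g⁻¹ * h⁻¹ * (g * h * g) := by group
    rw [this, hbr]; group
  refine Relation.ReflTransGen.head (HurwitzMove.slideRight [] [g] g h) ?_
  have m2 := HurwitzMove.slideRight [h] ([] : List G) (h⁻¹ * g * h) g
  rw [show g⁻¹ * (h⁻¹ * g * h) * g = h from key] at m2
  exact Relation.ReflTransGen.single m2
end

section
/- Let G be a group and g, h ∈ G elements satisfying the braid relation g h g = h g h. Then the 12-tuple (g, h, g, g, h, g, g, h, g, g, h, g) is Hurwitz equivalent to the 12-tuple (g, h, g, h, g, h, g, h, g, h, g, h); in particular (g h g)^4 = (g h)^6 in G. -/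
/-- If `g` and `h` satisfy the braid relation, then
`(g,h,g,g,h,g,g,h,g,g,h,g)` is Hurwitz equivalent to `(g,h,g,h,g,h,g,h,g,h,g,h)`;
in particular `(ghg)⁴ = (gh)⁶`. -/
theorem hurwitzEquiv_chain {G : Type*} [Group G] {g h : G}
    (hbr : g * h * g = h * g * h) :
    HurwitzEquiv [g, h, g, g, h, g, g, h, g, g, h, g]
      [g, h, g, h, g, h, g, h, g, h, g, h] ∧
    (g * h * g) ^ 4 = (g * h) ^ 6 := by
  have hb1 : h * g * h⁻¹ = g⁻¹ * h * g := by
    apply mul_left_cancel (a := g)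
    apply mul_right_cancel (b := h)
    simpa [mul_assoc] using hbr
  have hb2 : g * (g⁻¹ * h * g) * g⁻¹ = h := by group
  constructor
  · have m1 : HurwitzMove [g, h, g, g, h, g, g, h, g, g, h, g]
        [g, h, g, g, g⁻¹ * h * g, h, g, h, g, g, h, g] := by
      have := HurwitzMove.slideLeft (G := G) [g, h, g, g] [g, h, g, g, h, g] h g
      simpa [hb1] using this
    have m2 : HurwitzMove [g, h, g, g, g⁻¹ * h * g, h, g, h, g, g, h, g]
        [g, h, g, h, g, h, g, h, g, g, h, g] := by
      have := HurwitzMove.slideLeft (G := G) [g, h, g] [h, g, h, g, g, h, g] g (g⁻¹ * h * g)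
      simpa [hb2] using this
    have m3 : HurwitzMove [g, h, g, h, g, h, g, h, g, g, h, g]
        [g, h, g, h, g, h, g, h, g, g, g⁻¹ * h * g, h] := by
      have := HurwitzMove.slideLeft (G := G) [g, h, g, h, g, h, g, h, g, g] [] h g
      simpa [hb1] using this
    have m4 : HurwitzMove [g, h, g, h, g, h, g, h, g, g, g⁻¹ * h * g, h]
        [g, h, g, h, g, h, g, h, g, h, g, h] := by
      have := HurwitzMove.slideLeft (G := G) [g, h, g, h, g, h, g, h, g] [h] g (g⁻¹ * h * g)
      simpa [hb2] using this
    exact Relation.ReflTransGen.head m1 (Relation.ReflTransGen.head m2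
      (Relation.ReflTransGen.head m3 (Relation.ReflTransGen.single m4)))
  · have key : (g * h * g) ^ 2 = (g * h) ^ 3 := by
      calc (g * h * g) ^ 2 = (g * h * g) * (h * g * h) := by rw [sq, hbr]
        _ = (g * h) ^ 3 := by simp [pow_succ, mul_assoc]
    rw [show (4 : ℕ) = 2 * 2 from rfl, pow_mul, key, ← pow_mul]
end

section
/- Let G be a group and let α_1, α_2, α_4, α_5, α_7, α_8, σ_3, σ_4, σ_5, σ_6, σ_7, σ_8, β be elements of G. Set β_1 = α_1 β α_1⁻¹, β_4 = α_4 β α_4⁻¹ and β_7 = α_7 β α_7⁻¹, and assume that the product z = β_4 σ_3 σ_6 α_5 β_1 σ_4 σ_7 α_2 β_7 σ_5 σ_8 α_8 is central in G. Then the 12-tuple (β_4, σ_3, σ_6, α_5, β_1, σ_4, σ_7, α_2, β_7, σ_5, σ_8, α_8) is Hurwitz equivalent to the 12-tuple (α_5, α_5⁻¹ β_4 α_5, β_1 σ_4 β_1⁻¹, β_1 σ_7 β_1⁻¹, α_2, α_2⁻¹ β_1 α_2, β_7 σ_5 β_7⁻¹, β_7 σ_8 β_7⁻¹, α_8, α_8⁻¹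 β_7 α_8, β_4 σ_3 β_4⁻¹, β_4 σ_6 β_4⁻¹). -/
lemma HurwitzMove.prod_eq {G : Type*} [Group G] {l l' : List G}
    (h : HurwitzMove l l') : l.prod = l'.prod := by
  cases h with
  | slideLeft l₁ l₂ a b => simp [List.prod_append, mul_assoc]
  | slideRight l₁ l₂ a b => simp [List.prod_append, mul_assoc]

lemma HurwitzEquiv.prod_eq {G : Type*} [Group G] {l l' : List G}
    (h : HurwitzEquiv l l') : l.prod = l'.prod := by
  induction h with
  | refl => rfl
  | tail _ h ih => exact ih.trans h.prod_eq

lemma hurwitzEquiv_moveRight {G : Type*} [Group G] (l₂ : List G) :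
    ∀ (l₁ : List G) (a : G),
      HurwitzEquiv (l₁ ++ a :: l₂) ((l₁ ++ l₂) ++ [l₂.prod⁻¹ * a * l₂.prod]) := by
  induction l₂ with
  | nil => intro l₁ a; simp only [List.append_nil, List.prod_nil, inv_one, one_mul, mul_one]; exact Relation.ReflTransGen.refl
  | cons b t ih =>
    intro l₁ a
    refine Relation.ReflTransGen.head (HurwitzMove.slideRight l₁ t a b) ?_
    have h := ih (l₁ ++ [b]) (b⁻¹ * a * b)
    have e1 : l₁ ++ b :: (b⁻¹ * a * b) :: t = (l₁ ++ [b]) ++ (b⁻¹ * a * b) :: t := by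
      simp
    have e2 : (l₁ ++ [b]) ++ t = l₁ ++ b :: t := by simp
    have e3 : t.prod⁻¹ * (b⁻¹ * a * b) * t.prod
        = (b :: t).prod⁻¹ * a * (b :: t).prod := by
      simp [mul_assoc]
    rw [e1, ← e2, ← e3]
    exact h

lemma hurwitzEquiv_rotate {G : Type*} [Group G] (a : G) (l : List G)
    (hz : (a :: l).prod ∈ Subgroup.center G) :
    HurwitzEquiv (a :: l) (l ++ [a]) := by
  have h := hurwitzEquiv_moveRight l [] a
  have hc := Subgroup.mem_center_iff.mp hz a
  rw [List.prod_cons, mul_assoc a l.prod a] at hc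
  have hcomm : a * l.prod = l.prod * a := mul_left_cancel hc
  have : l.prod⁻¹ * a * l.prod = a := by
    rw [mul_assoc, hcomm, ← mul_assoc]; group
  simpa [this] using h

/-- The algebraic core of the Hurwitz equivalence between Korkmaz–Ozbagci's 9-holed
torus relation and the relation `N₉ = ∂₉`. -/
theorem hurwitzEquiv_korkmazOzbagci {G : Type*} [Group G]
    (α₁ α₂ α₄ α₅ α₇ α₈ σ₃ σ₄ σ₅ σ₆ σ₇ σ₈ β β₁ β₄ β₇ : G)
    (hβ₁ : β₁ = α₁ * β * α₁⁻¹) (hβ₄ : β₄ = α₄ * β * α₄⁻¹) (hβ₇ : β₇ = α₇ * β * α₇⁻¹)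
    (hz : β₄ * σ₃ * σ₆ * α₅ * β₁ * σ₄ * σ₇ * α₂ * β₇ * σ₅ * σ₈ * α₈ ∈
      Subgroup.center G) :
    HurwitzEquiv
      [β₄, σ₃, σ₆, α₅, β₁, σ₄, σ₇, α₂, β₇, σ₅, σ₈, α₈]
      [α₅, α₅⁻¹ * β₄ * α₅, β₁ * σ₄ * β₁⁻¹, β₁ * σ₇ * β₁⁻¹, α₂, α₂⁻¹ * β₁ * α₂,
        β₇ * σ₅ * β₇⁻¹, β₇ * σ₈ * β₇⁻¹, α₈, α₈⁻¹ * β₇ * α₈,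
        β₄ * σ₃ * β₄⁻¹, β₄ * σ₆ * β₄⁻¹] := by
  -- Step 1: local slides to the intermediate tuple s1
  have h1 : HurwitzEquiv
      [β₄, σ₃, σ₆, α₅, β₁, σ₄, σ₇, α₂, β₇, σ₅, σ₈, α₈]
      [β₄ * σ₃ * β₄⁻¹, β₄ * σ₆ * β₄⁻¹, α₅, α₅⁻¹ * β₄ * α₅,
       β₁ * σ₄ * β₁⁻¹, β₁ * σ₇ * β₁⁻¹, α₂, α₂⁻¹ * β₁ * α₂,
       β₇ * σ₅ * β₇⁻¹, β₇ * σ₈ * β₇⁻¹, α₈, α₈⁻¹ * β₇ * α₈] := by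
    refine Relation.ReflTransGen.head
      (HurwitzMove.slideLeft [] [σ₆, α₅, β₁, σ₄, σ₇, α₂, β₇, σ₅, σ₈, α₈] β₄ σ₃) ?_
    refine Relation.ReflTransGen.head
      (HurwitzMove.slideLeft [β₄ * σ₃ * β₄⁻¹] [α₅, β₁, σ₄, σ₇, α₂, β₇, σ₅, σ₈, α₈] β₄ σ₆) ?_
    refine Relation.ReflTransGen.head
      (HurwitzMove.slideRight [β₄ * σ₃ * β₄⁻¹, β₄ * σ₆ * β₄⁻¹]
        [β₁, σ₄, σ₇, α₂, β₇, σ₅, σ₈, α₈] β₄ α₅) ?_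
    refine Relation.ReflTransGen.head
      (HurwitzMove.slideLeft [β₄ * σ₃ * β₄⁻¹, β₄ * σ₆ * β₄⁻¹, α₅, α₅⁻¹ * β₄ * α₅]
        [σ₇, α₂, β₇, σ₅, σ₈, α₈] β₁ σ₄) ?_
    refine Relation.ReflTransGen.head
      (HurwitzMove.slideLeft [β₄ * σ₃ * β₄⁻¹, β₄ * σ₆ * β₄⁻¹, α₅, α₅⁻¹ * β₄ * α₅,
        β₁ * σ₄ * β₁⁻¹] [α₂, β₇, σ₅, σ₈, α₈] β₁ σ₇) ?_
    refine Relation.ReflTransGen.head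
      (HurwitzMove.slideRight [β₄ * σ₃ * β₄⁻¹, β₄ * σ₆ * β₄⁻¹, α₅, α₅⁻¹ * β₄ * α₅,
        β₁ * σ₄ * β₁⁻¹, β₁ * σ₇ * β₁⁻¹] [β₇, σ₅, σ₈, α₈] β₁ α₂) ?_
    refine Relation.ReflTransGen.head
      (HurwitzMove.slideLeft [β₄ * σ₃ * β₄⁻¹, β₄ * σ₆ * β₄⁻¹, α₅, α₅⁻¹ * β₄ * α₅,
        β₁ * σ₄ * β₁⁻¹, β₁ * σ₇ * β₁⁻¹, α₂, α₂⁻¹ * β₁ * α₂] [σ₈, α₈] β₇ σ₅) ?_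
    refine Relation.ReflTransGen.head
      (HurwitzMove.slideLeft [β₄ * σ₃ * β₄⁻¹, β₄ * σ₆ * β₄⁻¹, α₅, α₅⁻¹ * β₄ * α₅,
        β₁ * σ₄ * β₁⁻¹, β₁ * σ₇ * β₁⁻¹, α₂, α₂⁻¹ * β₁ * α₂, β₇ * σ₅ * β₇⁻¹] [α₈] β₇ σ₈) ?_
    refine Relation.ReflTransGen.head
      (HurwitzMove.slideRight [β₄ * σ₃ * β₄⁻¹, β₄ * σ₆ * β₄⁻¹, α₅, α₅⁻¹ * β₄ * α₅,
        β₁ * σ₄ * β₁⁻¹, β₁ * σ₇ * β₁⁻¹, α₂, α₂⁻¹ * β₁ * α₂, β₇ * σ₅ * β₇⁻¹,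
        β₇ * σ₈ * β₇⁻¹] [] β₇ α₈) ?_
    exact Relation.ReflTransGen.refl
  have hz0 : ([β₄, σ₃, σ₆, α₅, β₁, σ₄, σ₇, α₂, β₇, σ₅, σ₈, α₈] : List G).prod ∈
      Subgroup.center G := by
    simpa [List.prod_cons, mul_assoc] using hz
  have hz1 := h1.prod_eq ▸ hz0
  -- Step 2: rotate twice
  have h2 := hurwitzEquiv_rotate (β₄ * σ₃ * β₄⁻¹)
    [β₄ * σ₆ * β₄⁻¹, α₅, α₅⁻¹ * β₄ * α₅, β₁ * σ₄ * β₁⁻¹, β₁ * σ₇ * β₁⁻¹, α₂,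
     α₂⁻¹ * β₁ * α₂, β₇ * σ₅ * β₇⁻¹, β₇ * σ₈ * β₇⁻¹, α₈, α₈⁻¹ * β₇ * α₈] hz1
  have hz2 := h2.prod_eq ▸ hz1
  have h3 := hurwitzEquiv_rotate (β₄ * σ₆ * β₄⁻¹)
    [α₅, α₅⁻¹ * β₄ * α₅, β₁ * σ₄ * β₁⁻¹, β₁ * σ₇ * β₁⁻¹, α₂, α₂⁻¹ * β₁ * α₂,
     β₇ * σ₅ * β₇⁻¹, β₇ * σ₈ * β₇⁻¹, α₈, α₈⁻¹ * β₇ * α₈, β₄ * σ₃ * β₄⁻¹] hz2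
  exact (h1.trans h2).trans h3
end

section
/- Let G be a group and let α_1, α_2, α_3, α_5, α_6, α_7, σ_1, σ_2, σ_4, σ_7, β be elements of G. Set β_2 = α_2 β α_2⁻¹, β_6 = α_6 β α_6⁻¹, β_b2 = α_2⁻¹ β α_2 and β_b6 = α_6⁻¹ β α_6. Assume α_5 α_7 = α_7 α_5, α_1 α_3 = α_3 α_1, and that the product z = α_5 α_7 β_b6 β_2 σ_2 σ_1 α_1 α_3 β_b2 β_6 σ_4 σ_7 is central in G. Then the 12-tuple (α_5, α_7, β_b6, β_2, σ_2, σ_1, α_1, α_3, β_b2, β_6, σ_4, σ_7) is Hurwitz equivalent to the 12-tuple (α_5, β_2 σ_2 β_2⁻¹, β_2 σ_1 β_2⁻¹, α_3, α_3⁻¹ β_2 α_3, α_1 β_b2 α_1⁻¹, α_1, β_6 σ_4 β_6⁻¹, β_6 σ_7 β_6⁻¹, α_7, α_7⁻¹ β_6 α_7, α_5 β_b6 α_5⁻¹). -/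
section

variable {G : Type*} [Group G]

namespace HurwitzMove

theorem prod_eq_s8 {l l' : List G} (h : HurwitzMove l l') : l.prod = l'.prod := by
  cases h <;> simp [mul_assoc]

theorem append {l l' : List G} (h : HurwitzMove l l') (l₁ l₂ : List G) :
    HurwitzMove (l₁ ++ l ++ l₂) (l₁ ++ l' ++ l₂) := by
  cases h with
  | slideLeft m₁ m₂ a b => simpa using slideLeft (l₁ ++ m₁) (m₂ ++ l₂) a b
  | slideRight m₁ m₂ a b => simpa using slideRight (l₁ ++ m₁) (m₂ ++ l₂) a b

end HurwitzMove

namespace HurwitzEquiv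

theorem refl (l : List G) : HurwitzEquiv l l := Relation.ReflTransGen.refl

theorem trans {l₁ l₂ l₃ : List G} (h₁₂ : HurwitzEquiv l₁ l₂) (h₂₃ : HurwitzEquiv l₂ l₃) :
    HurwitzEquiv l₁ l₃ :=
  Relation.ReflTransGen.trans h₁₂ h₂₃

theorem prod_eq_s8 {l l' : List G} (h : HurwitzEquiv l l') : l.prod = l'.prod := by
  induction h with
  | refl => rfl
  | tail _ hmove ih => exact ih.trans hmove.prod_eq_s8

theorem slideLeft (a b : G) : HurwitzEquiv [a, b] [a * b * a⁻¹, a] :=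
  .single (HurwitzMove.slideLeft [] [] a b)

theorem slideRight (a b : G) : HurwitzEquiv [a, b] [b, b⁻¹ * a * b] :=
  .single (HurwitzMove.slideRight [] [] a b)

theorem swap {a b : G} (h : Commute a b) : HurwitzEquiv [a, b] [b, a] := by
  simpa [h.eq] using slideLeft a b

theorem append {l₁ l₁' l₂ l₂' : List G} (h₁ : HurwitzEquiv l₁ l₁') (h₂ : HurwitzEquiv l₂ l₂') :
    HurwitzEquiv (l₁ ++ l₂) (l₁' ++ l₂') := by
  have hleft : HurwitzEquiv (l₁ ++ l₂) (l₁' ++ l₂) :=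
    Relation.ReflTransGen.lift (· ++ l₂)
      (fun _ _ h => by simpa using h.append [] l₂) _ _ h₁
  have hright : HurwitzEquiv (l₁' ++ l₂) (l₁' ++ l₂') :=
    Relation.ReflTransGen.lift (l₁' ++ ·)
      (fun _ _ h => by simpa using h.append l₁' []) _ _ h₂
  exact hleft.trans hright

theorem cons {l l' : List G} (a : G) (h : HurwitzEquiv l l') : HurwitzEquiv (a :: l) (a :: l') :=
  (refl [a]).append h

theorem cons_map_conj (b : G) : ∀ l : List G,
    HurwitzEquiv (b :: l) (l.map (fun x => b * x * b⁻¹) ++ [b])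
  | [] => refl [b]
  | x :: l => ((slideLeft b x).append (refl l)).trans ((cons_map_conj b l).cons _)

theorem cons_concat_conj (a : G) : ∀ l : List G,
    HurwitzEquiv (a :: l) (l ++ [l.prod⁻¹ * a * l.prod])
  | [] => by simpa using refl [a]
  | x :: l => by
      simpa [mul_assoc] using
        ((slideRight a x).append (refl l)).trans ((cons_concat_conj (x⁻¹ * a * x) l).cons x)

theorem cons_concat_of_mem_center {a : G} {l : List G} (h : (a :: l).prod ∈ Subgroup.center G) :
    HurwitzEquiv (a :: l) (l ++ [a]) := by
  have hcomm : Commute a l.prod := by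
    have := Subgroup.mem_center_iff.mp h a
    rw [List.prod_cons, mul_assoc] at this
    exact mul_left_cancel this
  have hconj : l.prod⁻¹ * a * l.prod = a := by
    rw [mul_assoc, hcomm.eq, inv_mul_cancel_left]
  simpa only [hconj] using cons_concat_conj a l

theorem append_comm_of_mem_center :
    ∀ {l₁ l₂ : List G}, (l₁ ++ l₂).prod ∈ Subgroup.center G →
      HurwitzEquiv (l₁ ++ l₂) (l₂ ++ l₁)
  | [], l₂, _ => by simpa using refl l₂
  | a :: l₁, l₂, h => by
      have hrot : HurwitzEquiv (a :: (l₁ ++ l₂)) (l₁ ++ l₂ ++ [a]) :=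
        cons_concat_of_mem_center h
      have hcenter : (l₁ ++ l₂ ++ [a]).prod ∈ Subgroup.center G := hrot.prod_eq_s8 ▸ h
      have hrest : HurwitzEquiv (l₁ ++ l₂ ++ [a]) (l₂ ++ a :: l₁) := by
        simpa using append_comm_of_mem_center (l₁ := l₁) (l₂ := l₂ ++ [a]) (by simpa using hcenter)
      exact hrot.trans hrest

end HurwitzEquiv

end

theorem hurwitzEquiv_tanaka_general {G : Type*} [Group G]
    (α₁ α₃ α₅ α₇ σ₁ σ₂ σ₄ σ₇ β₂ β₆ βb₂ βb₆ : G)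
    (hc57 : α₅ * α₇ = α₇ * α₅) (hc13 : α₁ * α₃ = α₃ * α₁)
    (hz : α₅ * α₇ * βb₆ * β₂ * σ₂ * σ₁ * α₁ * α₃ * βb₂ * β₆ * σ₄ * σ₇ ∈
      Subgroup.center G) :
    HurwitzEquiv
      [α₅, α₇, βb₆, β₂, σ₂, σ₁, α₁, α₃, βb₂, β₆, σ₄, σ₇]
      [α₅, β₂ * σ₂ * β₂⁻¹, β₂ * σ₁ * β₂⁻¹, α₃, α₃⁻¹ * β₂ * α₃, α₁ * βb₂ * α₁⁻¹, α₁,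
        β₆ * σ₄ * β₆⁻¹, β₆ * σ₇ * β₆⁻¹, α₇, α₇⁻¹ * β₆ * α₇, α₅ * βb₆ * α₅⁻¹] := by
  set M := [β₂, σ₂, σ₁, α₁, α₃, βb₂, β₆, σ₄, σ₇]
  have hcenter : ([α₅, α₇, βb₆] ++ M).prod ∈ Subgroup.center G := by
    simpa [M, mul_assoc] using hz
  have hhead : HurwitzEquiv ([α₅, α₇, βb₆] ++ M) ([α₇, α₅ * βb₆ * α₅⁻¹] ++ α₅ :: M) :=
    (((HurwitzEquiv.swap hc57).append (.refl [βb₆])).trans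
      ((HurwitzEquiv.refl [α₇]).append (HurwitzEquiv.slideLeft α₅ βb₆))).append (.refl M)
  have hcycle : HurwitzEquiv ([α₅, α₇, βb₆] ++ M) (α₅ :: M ++ [α₇, α₅ * βb₆ * α₅⁻¹]) :=
    hhead.trans (HurwitzEquiv.append_comm_of_mem_center (hhead.prod_eq_s8 ▸ hcenter))
  have hA : HurwitzEquiv [β₂, σ₂, σ₁, α₁, α₃, βb₂]
      [β₂ * σ₂ * β₂⁻¹, β₂ * σ₁ * β₂⁻¹, α₃, α₃⁻¹ * β₂ * α₃, α₁ * βb₂ * α₁⁻¹, α₁] :=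
    ((HurwitzEquiv.cons_map_conj β₂ [σ₂, σ₁]).append
        ((HurwitzEquiv.swap hc13).append (.refl [βb₂]))).trans
      ((HurwitzEquiv.refl [β₂ * σ₂ * β₂⁻¹, β₂ * σ₁ * β₂⁻¹]).append
        ((HurwitzEquiv.slideRight β₂ α₃).append (HurwitzEquiv.slideLeft α₁ βb₂)))
  have hB : HurwitzEquiv [β₆, σ₄, σ₇, α₇]
      [β₆ * σ₄ * β₆⁻¹, β₆ * σ₇ * β₆⁻¹, α₇, α₇⁻¹ * β₆ * α₇] :=
    ((HurwitzEquiv.cons_map_conj β₆ [σ₄, σ₇]).append (.refl [α₇])).trans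
      ((HurwitzEquiv.refl [β₆ * σ₄ * β₆⁻¹, β₆ * σ₇ * β₆⁻¹]).append
        (HurwitzEquiv.slideRight β₆ α₇))
  exact hcycle.trans (((hA.append hB).cons α₅).append (.refl [α₅ * βb₆ * α₅⁻¹]))

/-- The algebraic core of the Hurwitz equivalence between Tanaka's 8-holed torus
relation and the relation `S₈ = ∂₈`. -/
theorem hurwitzEquiv_tanaka {G : Type*} [Group G]
    (α₁ α₂ α₃ α₅ α₆ α₇ σ₁ σ₂ σ₄ σ₇ β β₂ β₆ βb₂ βb₆ : G)
    (hβ₂ : β₂ = α₂ * β * α₂⁻¹) (hβ₆ : β₆ = α₆ * β * α₆⁻¹)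
    (hβb₂ : βb₂ = α₂⁻¹ * β * α₂) (hβb₆ : βb₆ = α₆⁻¹ * β * α₆)
    (hc57 : α₅ * α₇ = α₇ * α₅) (hc13 : α₁ * α₃ = α₃ * α₁)
    (hz : α₅ * α₇ * βb₆ * β₂ * σ₂ * σ₁ * α₁ * α₃ * βb₂ * β₆ * σ₄ * σ₇ ∈
      Subgroup.center G) :
    HurwitzEquiv
      [α₅, α₇, βb₆, β₂, σ₂, σ₁, α₁, α₃, βb₂, β₆, σ₄, σ₇]
      [α₅, β₂ * σ₂ * β₂⁻¹, β₂ * σ₁ * β₂⁻¹, α₃, α₃⁻¹ * β₂ * α₃, α₁ * βb₂ * α₁⁻¹, α₁,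
        β₆ * σ₄ * β₆⁻¹, β₆ * σ₇ * β₆⁻¹, α₇, α₇⁻¹ * β₆ * α₇, α₅ * βb₆ * α₅⁻¹] :=
  hurwitzEquiv_tanaka_general α₁ α₃ α₅ α₇ σ₁ σ₂ σ₄ σ₇ β₂ β₆ βb₂ βb₆ hc57 hc13 hz
end

section
/- Let n and l' be natural numbers with l' ≤ 7, let a and b be integers, and let c_1, …, c_{l'} be integers. Assume a > 0, b > n·a, c_i > 0 for every i, and that the two equations (E1) 8 − l' = −n·a² + 2·a·b − ∑_{i=1}^{l'} c_i² and (E2) 8 − l' + (n − 2)·a − 2·b + ∑_{i=1}^{l'} c_i = 0 hold. Then c_i = 1 for every i, a = 2, b = n + 2, and n ≤ 1. -/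
/-- The Diophantine analysis in the proof of Theorem 3.1: the positivity conditions
together with the base-point equation (E1) and the genus equation (E2) force
`cᵢ = 1` for all `i`, `a = 2`, `b = n + 2`, and `n ≤ 1`. -/
theorem fiberClass_classification (n l' : ℕ) (hl' : l' ≤ 7) (a b : ℤ)
    (c : Fin l' → ℤ) (ha : 0 < a) (hb : (n : ℤ) * a < b) (hc : ∀ i, 0 < c i)
    (hE1 : (8 : ℤ) - l' = -(n : ℤ) * a ^ 2 + 2 * a * b - ∑ i, c i ^ 2)
    (hE2 : (8 : ℤ) - l' + ((n : ℤ) - 2) * a - 2 * b + ∑ i, c i = 0) :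
    (∀ i, c i = 1) ∧ a = 2 ∧ b = (n : ℤ) + 2 ∧ n ≤ 1 := by
  set T : ℤ := ∑ i, (c i - 1) with hT
  set Q : ℤ := ∑ i, (c i - 1) ^ 2 with hQ
  have hsum1 : ∑ i, c i = T + l' := by
    rw [hT, Finset.sum_sub_distrib]
    simp
  have hsum2 : ∑ i, c i ^ 2 = Q + 2 * T + l' := by
    have h : ∀ i : Fin l', c i ^ 2 = (c i - 1) ^ 2 + 2 * (c i - 1) + 1 := fun i => by ring
    rw [Finset.sum_congr rfl fun i _ => h i, Finset.sum_add_distrib, Finset.sum_add_distrib,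
      hQ, hT, Finset.mul_sum]
    simp
  rw [hsum1] at hE2
  rw [hsum2] at hE1
  have hTnn : 0 ≤ T := Finset.sum_nonneg fun i _ => by have := hc i; omega
  have hQnn : 0 ≤ Q := Finset.sum_nonneg fun i _ => sq_nonneg _
  have hCS : T ^ 2 ≤ (l' : ℤ) * Q := by
    have := sq_sum_le_card_mul_sum_sq (s := Finset.univ) (f := fun i : Fin l' => c i - 1)
    simpa [hT, hQ] using this
  have hCS7 : T ^ 2 ≤ 7 * Q := by
    have h7 : (l' : ℤ) ≤ 7 := by exact_mod_cast hl'
    nlinarith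
  have key : 2 * (a - 2) ^ 2 - T * (a - 2) + Q = 0 := by
    linear_combination hE1 - a * hE2
  have hQ0 : Q = 0 := by nlinarith [sq_nonneg (4 * (a - 2) - T)]
  have hT0 : T = 0 := by nlinarith
  have ha2 : a = 2 := by nlinarith
  have hci : ∀ i, c i = 1 := by
    intro i
    have := (Finset.sum_eq_zero_iff_of_nonneg fun i _ => sq_nonneg (c i - 1)).1 hQ0 i
      (Finset.mem_univ i)
    have := sq_eq_zero_iff.1 this
    omega
  have hbval : b = (n : ℤ) + 2 := by
    rw [ha2, hT0] at hE2; linarith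
  refine ⟨hci, ha2, hbval, ?_⟩
  rw [ha2, hbval] at hb
  exact_mod_cast (by linarith : (n : ℤ) ≤ 1)
end

section
/- Let n and l' be natural numbers, let a and b be integers, and let c_1, …, c_{l'} be integers. If (E1) 8 − l' = −n·a² + 2·a·b − ∑_{i=1}^{l'} c_i² and (E2) 8 − l' + (n − 2)·a − 2·b + ∑_{i=1}^{l'} c_i = 0, then (∑_{i=1}^{l'} c_i)² + 2·(8 − l')·∑_{i=1}^{l'} c_i − 8·∑_{i=1}^{l'} c_i² − l'·(8 − l') ≥ 0. -/
/-- The discriminant inequality (8): since the quadratic equation in `a` obtained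
from (E1) and (E2) has the integer root `a`, its discriminant is nonnegative. -/
theorem discriminant_nonneg (n l' : ℕ) (a b : ℤ) (c : Fin l' → ℤ)
    (hE1 : (8 : ℤ) - l' = -(n : ℤ) * a ^ 2 + 2 * a * b - ∑ i, c i ^ 2)
    (hE2 : (8 : ℤ) - l' + ((n : ℤ) - 2) * a - 2 * b + ∑ i, c i = 0) :
    (∑ i, c i) ^ 2 + 2 * ((8 : ℤ) - l') * ∑ i, c i - 8 * ∑ i, c i ^ 2
      - (l' : ℤ) * ((8 : ℤ) - l') ≥ 0 := by
  have h2a : ((8 : ℤ) - l' + ((n : ℤ) - 2) * a - 2 * b + ∑ i, c i) * a = 0 := by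
    rw [hE2, zero_mul]
  nlinarith [sq_nonneg (4 * a - ((8 : ℤ) - l' + ∑ i, c i)), hE1, h2a]
end

section
/- Let l' be a natural number with l' ≤ 7, and let c_1, …, c_{l'} be nonnegative real numbers satisfying (∑_{i=1}^{l'} c_i)² + 2·(8 − l')·∑_{i=1}^{l'} c_i − 8·∑_{i=1}^{l'} c_i² − l'·(8 − l') ≥ 0. Then c_i = 1 for every i; in particular ∑_{i=1}^{l'} c_i² = l'. -/
/-- The Cauchy–Schwarz step in the proof of Theorem 3.1: for `l' ≤ 7` and nonnegative
reals `c₁, …, c_{l'}` satisfying the discriminant inequality (8), all `cᵢ` equal `1`;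
in particular `∑ cᵢ² = l'`. -/
theorem all_ci_eq_one (l' : ℕ) (hl' : l' ≤ 7) (c : Fin l' → ℝ) (hc : ∀ i, 0 ≤ c i)
    (h : (∑ i, c i) ^ 2 + 2 * ((8 : ℝ) - l') * ∑ i, c i - 8 * ∑ i, c i ^ 2
      - (l' : ℝ) * ((8 : ℝ) - l') ≥ 0) :
    (∀ i, c i = 1) ∧ ∑ i, c i ^ 2 = (l' : ℝ) := by
  have hcs : (∑ i, c i) ^ 2 ≤ (l' : ℝ) * ∑ i, c i ^ 2 := by
    have := sq_sum_le_card_mul_sum_sq (s := (Finset.univ : Finset (Fin l'))) (f := c)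
    simpa using this
  have hl8 : (l' : ℝ) < 8 := by
    have : (l' : ℝ) ≤ 7 := by exact_mod_cast hl'
    linarith
  have expand : ∑ i, (c i - 1) ^ 2 = ∑ i, c i ^ 2 - 2 * ∑ i, c i + l' := by
    have : ∑ i, (c i - 1) ^ 2 = ∑ i, (c i ^ 2 - 2 * c i + 1) := by
      apply Finset.sum_congr rfl; intro i _; ring
    rw [this, Finset.sum_add_distrib, Finset.sum_sub_distrib, ← Finset.mul_sum]
    simp [Finset.card_univ]
  have key : ∑ i, (c i - 1) ^ 2 ≤ 0 := by
    rw [expand]; nlinarith [hcs, h, hl8]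
  have hzero : ∑ i, (c i - 1) ^ 2 = 0 :=
    le_antisymm key (Finset.sum_nonneg fun i _ => sq_nonneg _)
  have hone : ∀ i, c i = 1 := by
    intro i
    have := (Finset.sum_eq_zero_iff_of_nonneg (fun i _ => sq_nonneg (c i - 1))).mp hzero i
      (Finset.mem_univ i)
    have : c i - 1 = 0 := by nlinarith [this]
    linarith
  refine ⟨hone, ?_⟩
  simp [hone]
end
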